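/- arXiv:2401.17943 — 2 statements merged into one kernel-verified Lean document; each statement's English description precedes it below -/
import Mathlib

section
/- Let λ > 1, γ ∈ (0,1), τ > 0, and 0 < 𝚙 < 1/(τ+2), and let ω ∈ ℝ² satisfy |ω·k| ≥ γ|k|^{-τ} for all nonzero k ∈ ℤ². Then there is a constant C (independent of λ, γ, ω) such that for every s ≥ 0 and every zero-average function h ∈ H^s(𝕋²), the unique zero-average solution v of (λω·∇ − Δ)v = h satisfies ‖v‖_{s+1} ≤ C γ^{-1} λ^{-𝚙} ‖h‖_s, where ‖u‖_s² = Σ_{k∈ℤ²} ⟨k⟩^{2s}|û(k)|². -/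
/-!
Since `v̂(k) = ĥ(k) / Λ(k)`, everything reduces to the lower bound on the symbol
`γ λ^p |k| ≤ max (λ |ω·k|, |k|²) ≤ |Λ(k)|` for `k ≠ 0`. For `|k| ≥ λ^p` the dissipative part
`|k|²` gives it at once. For `|k| < λ^p` the Diophantine condition gives `γ ≤ |ω·k| |k|^τ`, and
`λ^p |k|^{1+τ} ≤ λ^{p(τ+2)} ≤ λ` because `p(τ+2) ≤ 1`. With `⟨k⟩² ≤ 2|k|²` this yields the
estimate with `C = 2`.
-/

/-- The Euclidean norm of a Fourier mode `k ∈ ℤ²`. -/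
noncomputable def knorm (k : ℤ × ℤ) : ℝ := Real.sqrt ((k.1 : ℝ)^2 + (k.2 : ℝ)^2)

/-- The scalar product `ω · k` for `ω ∈ ℝ²`, `k ∈ ℤ²`. -/
noncomputable def wdot (ω : ℝ × ℝ) (k : ℤ × ℤ) : ℝ := ω.1 * (k.1 : ℝ) + ω.2 * (k.2 : ℝ)

/-- The eigenvalue `Λ(k) = iλ(ω·k) + |k|²` of the operator `λω·∇ − Δ`. -/
noncomputable def Lam (lam : ℝ) (ω : ℝ × ℝ) (k : ℤ × ℤ) : ℂ :=
  Complex.I * ((lam * wdot ω k : ℝ) : ℂ) + (((k.1 : ℝ)^2 + (k.2 : ℝ)^2 : ℝ) : ℂ)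

/-- The Japanese bracket squared `⟨k⟩² = 1 + |k|²`. -/
noncomputable def jap (k : ℤ × ℤ) : ℝ := 1 + (k.1 : ℝ)^2 + (k.2 : ℝ)^2

/-- The Sobolev `H^s(𝕋²)` norm of a function given by its Fourier coefficients `u : ℤ² → ℂ`:
`‖u‖_s = (Σ_k ⟨k⟩^{2s} |û(k)|²)^{1/2}`. -/
noncomputable def Hnorm (s : ℝ) (u : ℤ × ℤ → ℂ) : ℝ :=
  Real.sqrt (∑' k : ℤ × ℤ, jap k ^ s * ‖u k‖ ^ 2)

lemma one_le_sq_add_sq_of_ne_zero {k : ℤ × ℤ} (hk : k ≠ 0) : 1 ≤ (k.1 : ℝ) ^ 2 + (k.2 : ℝ) ^ 2 := by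
  have hk' : k.1 ≠ 0 ∨ k.2 ≠ 0 := by
    by_contra! hcon
    exact hk (Prod.ext hcon.1 hcon.2)
  have : (1 : ℤ) ≤ k.1 ^ 2 + k.2 ^ 2 := by
    rcases hk' with h | h
    · nlinarith [Int.one_le_abs h, sq_abs k.1, sq_nonneg k.2]
    · nlinarith [Int.one_le_abs h, sq_abs k.2, sq_nonneg k.1]
  exact_mod_cast this

lemma knorm_sq (k : ℤ × ℤ) : knorm k ^ 2 = (k.1 : ℝ) ^ 2 + (k.2 : ℝ) ^ 2 :=
  Real.sq_sqrt (by positivity)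

lemma knorm_pos {k : ℤ × ℤ} (hk : k ≠ 0) : 0 < knorm k :=
  Real.sqrt_pos.mpr (zero_lt_one.trans_le (one_le_sq_add_sq_of_ne_zero hk))

lemma jap_pos (k : ℤ × ℤ) : 0 < jap k := by unfold jap; positivity

lemma jap_le_two_mul_knorm_sq {k : ℤ × ℤ} (hk : k ≠ 0) : jap k ≤ 2 * knorm k ^ 2 := by
  have := one_le_sq_add_sq_of_ne_zero hk
  rw [knorm_sq]; unfold jap; linarith

lemma max_le_norm_Lam {lam : ℝ} (hlam : 0 ≤ lam) (ω : ℝ × ℝ) (k : ℤ × ℤ) :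
    max (lam * |wdot ω k|) (knorm k ^ 2) ≤ ‖Lam lam ω k‖ := by
  have hre : (Lam lam ω k).re = knorm k ^ 2 := by
    simp only [Lam, Complex.add_re, Complex.mul_re, Complex.I_re, Complex.I_im,
      Complex.ofReal_re, Complex.ofReal_im, knorm_sq]
    ring
  have him : (Lam lam ω k).im = lam * wdot ω k := by
    simp only [Lam, Complex.add_im, Complex.mul_im, Complex.I_re, Complex.I_im,
      Complex.ofReal_re, Complex.ofReal_im]
    ring
  refine max_le ?_ ?_
  · calc lam * |wdot ω k| = |(Lam lam ω k).im| := by rw [him, abs_mul, abs_of_nonneg hlam]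
      _ ≤ ‖Lam lam ω k‖ := Complex.abs_im_le_norm _
  · rw [← hre]
    exact (le_abs_self _).trans (Complex.abs_re_le_norm _)

lemma mul_rpow_mul_le_max_of_diophantine {lam γ τ p r d : ℝ} (hlam : 1 ≤ lam) (hγ : γ ≤ 1)
    (hτ : -1 ≤ τ) (hpτ : p * (τ + 2) ≤ 1) (hr : 0 < r) (hd : γ * r ^ (-τ) ≤ |d|) :
    γ * lam ^ p * r ≤ max (lam * |d|) (r ^ 2) := by
  rcases le_or_gt (lam ^ p) r with hqr | hrq
  · refine le_max_of_le_right ?_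
    calc γ * lam ^ p * r ≤ 1 * r * r := by gcongr
      _ = r ^ 2 := by ring
  · refine le_max_of_le_left ?_
    have hq_pow : lam ^ p * (lam ^ p) ^ (1 + τ) ≤ lam := by
      have hlam0 : 0 < lam := zero_lt_one.trans_le hlam
      rw [← Real.rpow_mul hlam0.le, ← Real.rpow_add hlam0]
      calc lam ^ (p + p * (1 + τ)) ≤ lam ^ (1 : ℝ) :=
            Real.rpow_le_rpow_of_exponent_le hlam (by linarith)
        _ = lam := Real.rpow_one lam
    calc γ * lam ^ p * r = γ * r ^ (-τ) * (lam ^ p * r ^ (1 + τ)) := by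
          rw [show γ * r ^ (-τ) * (lam ^ p * r ^ (1 + τ)) = γ * lam ^ p * (r ^ (-τ) * r ^ (1 + τ))
            by ring, ← Real.rpow_add hr]
          norm_num
      _ ≤ |d| * (lam ^ p * (lam ^ p) ^ (1 + τ)) := by
          have : r ^ (1 + τ) ≤ (lam ^ p) ^ (1 + τ) :=
            Real.rpow_le_rpow hr.le hrq.le (by linarith)
          gcongr
      _ ≤ |d| * lam := by gcongr
      _ = lam * |d| := mul_comm _ _

lemma jap_mul_norm_sq_le {k : ℤ × ℤ} (hk : k ≠ 0) {c : ℝ} (hc : 0 < c) {z x y : ℂ}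
    (hz : c * knorm k ≤ ‖z‖) (hzx : z * x = y) : jap k * ‖x‖ ^ 2 ≤ (2 * c⁻¹) ^ 2 * ‖y‖ ^ 2 := by
  have hxy : c * knorm k * ‖x‖ ≤ ‖y‖ := by
    rw [← hzx, norm_mul]
    gcongr
  calc jap k * ‖x‖ ^ 2 ≤ 2 * knorm k ^ 2 * ‖x‖ ^ 2 := by
        gcongr
        exact jap_le_two_mul_knorm_sq hk
    _ = 2 * c⁻¹ ^ 2 * (c * knorm k * ‖x‖) ^ 2 := by field_simp
    _ ≤ 2 * c⁻¹ ^ 2 * ‖y‖ ^ 2 := by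
        have := (knorm_pos hk).le
        gcongr
    _ ≤ (2 * c⁻¹) ^ 2 * ‖y‖ ^ 2 := by
        rw [mul_pow]
        gcongr
        norm_num

lemma Hnorm_le_mul_of_forall_le {s t K : ℝ} {u v : ℤ × ℤ → ℂ} (hK : 0 ≤ K)
    (hu : Summable fun k => jap k ^ s * ‖u k‖ ^ 2)
    (hle : ∀ k, jap k ^ t * ‖v k‖ ^ 2 ≤ K ^ 2 * (jap k ^ s * ‖u k‖ ^ 2)) :
    Hnorm t v ≤ K * Hnorm s u := by
  have hv : Summable fun k => jap k ^ t * ‖v k‖ ^ 2 :=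
    (hu.mul_left _).of_nonneg_of_le
      (fun k => mul_nonneg (Real.rpow_nonneg (jap_pos k).le _) (sq_nonneg _)) hle
  unfold Hnorm
  rw [← Real.sqrt_sq hK, ← Real.sqrt_mul (sq_nonneg K), ← tsum_mul_left]
  exact Real.sqrt_le_sqrt (hv.tsum_le_tsum hle (hu.mul_left _))

theorem stmt2 :
    ∃ C > (0 : ℝ), ∀ (lam γ τ p s : ℝ) (ω : ℝ × ℝ) (h v : ℤ × ℤ → ℂ),
      1 < lam → γ ∈ Set.Ioo (0 : ℝ) 1 → 0 < τ → 0 < p → p < 1 / (τ + 2) → 0 ≤ s →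
      (∀ k : ℤ × ℤ, k ≠ 0 → γ * knorm k ^ (-τ) ≤ |wdot ω k|) →
      -- `h ∈ H^s(𝕋²)` with zero average
      h 0 = 0 → Summable (fun k : ℤ × ℤ => jap k ^ s * ‖h k‖ ^ 2) →
      -- `v` is the (unique) zero-average solution of `(λω·∇ − Δ) v = h`
      v 0 = 0 → (∀ k : ℤ × ℤ, k ≠ 0 → Lam lam ω k * v k = h k) →
      Hnorm (s + 1) v ≤ C * γ⁻¹ * lam ^ (-p) * Hnorm s h := by
  refine ⟨2, two_pos, ?_⟩
  rintro lam γ τ p s ω h v hlam ⟨hγ0, hγ1⟩ hτ - hpτ - hdio h0 hh v0 hLv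
  have hpτ' : p * (τ + 2) ≤ 1 := ((lt_div_iff₀ (by linarith)).mp hpτ).le
  have hc : 0 < γ * lam ^ p := by positivity
  rw [Real.rpow_neg (by linarith), mul_assoc 2, ← mul_inv]
  refine Hnorm_le_mul_of_forall_le (by positivity) hh fun k => ?_
  rcases eq_or_ne k 0 with rfl | hk
  · simp [v0, h0]
  have hLam : γ * lam ^ p * knorm k ≤ ‖Lam lam ω k‖ :=
    (mul_rpow_mul_le_max_of_diophantine hlam.le hγ1.le (by linarith) hpτ' (knorm_pos hk)
      (hdio k hk)).trans (max_le_norm_Lam (by linarith) ω k)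
  calc jap k ^ (s + 1) * ‖v k‖ ^ 2 = jap k ^ s * (jap k * ‖v k‖ ^ 2) := by
        rw [Real.rpow_add_one (jap_pos k).ne']
        ring
    _ ≤ jap k ^ s * ((2 * (γ * lam ^ p)⁻¹) ^ 2 * ‖h k‖ ^ 2) :=
        mul_le_mul_of_nonneg_left (jap_mul_norm_sq_le hk hc hLam (hLv k hk))
          (Real.rpow_nonneg (jap_pos k).le s)
    _ = (2 * (γ * lam ^ p)⁻¹) ^ 2 * (jap k ^ s * ‖h k‖ ^ 2) := by ring
end

section
/- Let λ > 1, γ ∈ (0,1), τ > 0, s ≥ 0, and let ω ∈ ℝ² satisfy |ω·k| ≥ γ|k|^{-τ} for all nonzero k ∈ ℤ². Then the zero-average solution v of (λω·∇ − Δ)v = h, given by v̂(k) = ĥ(k)/(iλω·k+|k|²), satisfies the loss-of-derivatives estimate ‖v‖_s ≤ C γ^{-1} λ^{-1} ‖h‖_{s+τ} for every zero-average h ∈ H^{s+τ}(𝕋²), with C independent of λ, γ, ω, h. -/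
lemma jap_rpow_nonneg (k : ℤ × ℤ) (s : ℝ) : 0 ≤ jap k ^ s := (Real.rpow_pos_of_pos (jap_pos k) s).le

lemma knorm_nonneg (k : ℤ × ℤ) : 0 ≤ knorm k := Real.sqrt_nonneg _

lemma knorm_rpow_sq_le_jap_rpow (k : ℤ × ℤ) {τ : ℝ} (hτ : 0 ≤ τ) :
    (knorm k ^ τ) ^ 2 ≤ jap k ^ τ := by
  rw [Real.rpow_pow_comm (knorm_nonneg k), knorm, Real.sq_sqrt (by positivity)]
  exact Real.rpow_le_rpow (by positivity) (by unfold jap; linarith) hτ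

lemma abs_mul_wdot_le_norm_Lam (lam : ℝ) (ω : ℝ × ℝ) (k : ℤ × ℤ) :
    |lam * wdot ω k| ≤ ‖Lam lam ω k‖ := by
  have him : (Lam lam ω k).im = lam * wdot ω k := by
    simp only [Lam, Complex.add_im, Complex.mul_im, Complex.I_re, Complex.I_im,
      Complex.ofReal_re, Complex.ofReal_im]
    ring
  exact him ▸ Complex.abs_im_le_norm _

lemma norm_le_of_Lam_mul_eq {lam γ τ : ℝ} {ω : ℝ × ℝ} {k : ℤ × ℤ} {x y : ℂ}
    (hlam : 0 < lam) (hγ : 0 < γ) (hk : k ≠ 0)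
    (hdio : γ * knorm k ^ (-τ) ≤ |wdot ω k|) (hxy : Lam lam ω k * x = y) :
    ‖x‖ ≤ γ⁻¹ * lam⁻¹ * knorm k ^ τ * ‖y‖ := by
  have hK : 0 < knorm k ^ τ := Real.rpow_pos_of_pos (knorm_pos hk) τ
  have hLam : lam * γ * (knorm k ^ τ)⁻¹ ≤ ‖Lam lam ω k‖ := by
    calc lam * γ * (knorm k ^ τ)⁻¹ = lam * (γ * knorm k ^ (-τ)) := by
          rw [Real.rpow_neg (knorm_nonneg k)]; ring
      _ ≤ lam * |wdot ω k| := mul_le_mul_of_nonneg_left hdio hlam.le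
      _ = |lam * wdot ω k| := by rw [abs_mul, abs_of_pos hlam]
      _ ≤ ‖Lam lam ω k‖ := abs_mul_wdot_le_norm_Lam lam ω k
  calc ‖x‖ = γ⁻¹ * lam⁻¹ * knorm k ^ τ * (lam * γ * (knorm k ^ τ)⁻¹ * ‖x‖) := by
        field_simp
    _ ≤ γ⁻¹ * lam⁻¹ * knorm k ^ τ * (‖Lam lam ω k‖ * ‖x‖) := by gcongr
    _ = γ⁻¹ * lam⁻¹ * knorm k ^ τ * ‖y‖ := by rw [← hxy, norm_mul]

lemma jap_rpow_mul_sq_le_of_Lam_mul_eq {lam γ τ : ℝ} (s : ℝ) {ω : ℝ × ℝ} {k : ℤ × ℤ}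
    {x y : ℂ} (hlam : 0 < lam) (hγ : 0 < γ) (hτ : 0 ≤ τ) (hk : k ≠ 0)
    (hdio : γ * knorm k ^ (-τ) ≤ |wdot ω k|) (hxy : Lam lam ω k * x = y) :
    jap k ^ s * ‖x‖ ^ 2 ≤ (γ⁻¹ * lam⁻¹) ^ 2 * (jap k ^ (s + τ) * ‖y‖ ^ 2) := by
  have hx := norm_le_of_Lam_mul_eq hlam hγ hk hdio hxy
  calc jap k ^ s * ‖x‖ ^ 2 ≤ jap k ^ s * (γ⁻¹ * lam⁻¹ * knorm k ^ τ * ‖y‖) ^ 2 :=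
        mul_le_mul_of_nonneg_left (by gcongr) (jap_rpow_nonneg k s)
    _ = jap k ^ s * ((γ⁻¹ * lam⁻¹) ^ 2 * (knorm k ^ τ) ^ 2 * ‖y‖ ^ 2) := by ring
    _ ≤ jap k ^ s * ((γ⁻¹ * lam⁻¹) ^ 2 * jap k ^ τ * ‖y‖ ^ 2) :=
        mul_le_mul_of_nonneg_left (by gcongr; exact knorm_rpow_sq_le_jap_rpow k hτ)
          (jap_rpow_nonneg k s)
    _ = (γ⁻¹ * lam⁻¹) ^ 2 * (jap k ^ (s + τ) * ‖y‖ ^ 2) := by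
        rw [Real.rpow_add (jap_pos k)]; ring

lemma Hnorm_le_of_forall_le {s t c : ℝ} {u w : ℤ × ℤ → ℂ} (hc : 0 ≤ c)
    (hw : Summable fun k => jap k ^ t * ‖w k‖ ^ 2)
    (huw : ∀ k, jap k ^ s * ‖u k‖ ^ 2 ≤ c ^ 2 * (jap k ^ t * ‖w k‖ ^ 2)) :
    Hnorm s u ≤ c * Hnorm t w := by
  have hu : Summable fun k => jap k ^ s * ‖u k‖ ^ 2 :=
    (hw.mul_left _).of_nonneg_of_le (fun k => mul_nonneg (jap_rpow_nonneg k s) (sq_nonneg _)) huw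
  have hsum : ∑' k, jap k ^ s * ‖u k‖ ^ 2 ≤ c ^ 2 * ∑' k, jap k ^ t * ‖w k‖ ^ 2 := by
    rw [← tsum_mul_left]
    exact hu.tsum_le_tsum huw (hw.mul_left _)
  calc Hnorm s u ≤ Real.sqrt (c ^ 2 * ∑' k, jap k ^ t * ‖w k‖ ^ 2) := Real.sqrt_le_sqrt hsum
    _ = c * Hnorm t w := by rw [Real.sqrt_mul (sq_nonneg c), Real.sqrt_sq hc, Hnorm]

theorem stmt3 :
    ∃ C > (0 : ℝ), ∀ (lam γ τ s : ℝ) (ω : ℝ × ℝ) (h v : ℤ × ℤ → ℂ),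
      1 < lam → γ ∈ Set.Ioo (0 : ℝ) 1 → 0 < τ → 0 ≤ s →
      (∀ k : ℤ × ℤ, k ≠ 0 → γ * knorm k ^ (-τ) ≤ |wdot ω k|) →
      -- `h ∈ H^{s+τ}(𝕋²)` with zero average
      h 0 = 0 → Summable (fun k : ℤ × ℤ => jap k ^ (s + τ) * ‖h k‖ ^ 2) →
      -- `v` is the zero-average solution of `(λω·∇ − Δ) v = h`, i.e. `v̂(k) = ĥ(k)/Λ(k)`
      v 0 = 0 → (∀ k : ℤ × ℤ, k ≠ 0 → Lam lam ω k * v k = h k) →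
      Hnorm s v ≤ C * γ⁻¹ * lam⁻¹ * Hnorm (s + τ) h := by
  refine ⟨1, one_pos, fun lam γ τ s ω h v hlam hγ hτ _ hdio _ hsum v0 hv => ?_⟩
  have hlam0 : 0 < lam := one_pos.trans hlam
  rw [one_mul]
  refine Hnorm_le_of_forall_le (by have := hγ.1; positivity) hsum fun k => ?_
  rcases eq_or_ne k 0 with rfl | hk
  · rw [v0, norm_zero, zero_pow two_ne_zero, mul_zero]
    exact mul_nonneg (sq_nonneg _) (mul_nonneg (jap_rpow_nonneg 0 _) (sq_nonneg _))
  · exact jap_rpow_mul_sq_le_of_Lam_mul_eq s hlam0 hγ.1 hτ.le hk (hdio k hk) (hv k hk)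
end
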